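/- arXiv:2111.13523 — 3 statements merged into one kernel-verified Lean document; each statement's English description precedes it below -/
import Mathlib

section
/- Let Σ be a finite alphabet, a ∈ Σ, and L ⊆ {a}* a regular language. Then the language L' = L ⧢ (Σ∖{a})* (equivalently, L' = { w ∈ Σ* : a^{|w|_a} ∈ L }) is a commutative regular language with a product-form minimal automaton. In particular, if |Σ| = 1 then every regular language over Σ has a product-form minimal automaton. -/
/-- The Nerode right-congruence of a language `L`: `u ≡_L v` iff
for all words `x`, `u ++ x ∈ L ↔ v ++ x ∈ L`. -/
def NerodeEq {α : Type*} (L : Set (List α)) (u v : List α) : Prop :=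
  ∀ x : List α, u ++ x ∈ L ↔ v ++ x ∈ L

/-- The Nerode right-congruence as a setoid on words. -/
def nerodeSetoid {α : Type*} (L : Set (List α)) : Setoid (List α) where
  r := NerodeEq L
  iseqv := ⟨fun _ _ => Iff.rfl, fun h x => (h x).symm, fun h1 h2 x => (h1 x).trans (h2 x)⟩

/-- A language is regular iff its Nerode right-congruence has finitely many classes. -/
def RegularLang {α : Type*} (L : Set (List α)) : Prop :=
  Finite (Quotient (nerodeSetoid L))

/-- The state complexity of `L`: the number of Nerode right-congruence classes. -/
noncomputable def sc {α : Type*} (L : Set (List α)) : ℕ :=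
  Nat.card (Quotient (nerodeSetoid L))

/-- A language is commutative if membership only depends on the number of
occurrences of each letter. -/
def CommutativeLang {α : Type*} [DecidableEq α] (L : Set (List α)) : Prop :=
  ∀ u v : List α, (∀ x : α, u.count x = v.count x) → (u ∈ L ↔ v ∈ L)

/-- A (commutative) language has a product-form minimal automaton iff for all words
`u, v`: `u ≡_L v` holds if and only if `x^{|u|_x} ≡_L x^{|v|_x}` for every letter `x`. -/
def HasProductForm {α : Type*} [DecidableEq α] (L : Set (List α)) : Prop :=
  ∀ u v : List α,
    NerodeEq L u v ↔
      ∀ x : α, NerodeEq L (List.replicate (u.count x) x) (List.replicate (v.count x) x)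

/-- `IsShuffleOf u v w` holds iff `w` is an interleaving `x₁y₁x₂y₂⋯xₙyₙ`
with `u = x₁⋯xₙ` and `v = y₁⋯yₙ`. -/
inductive IsShuffleOf {α : Type*} : List α → List α → List α → Prop
  | nil : IsShuffleOf [] [] []
  | left {u v w : List α} {a : α} : IsShuffleOf u v w → IsShuffleOf (a :: u) v (a :: w)
  | right {u v w : List α} {a : α} : IsShuffleOf u v w → IsShuffleOf u (a :: v) (a :: w)

/-- The shuffle of two languages. -/
def shuffleLang {α : Type*} (U V : Set (List α)) : Set (List α) :=
  {w | ∃ u ∈ U, ∃ v ∈ V, IsShuffleOf u v w}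

/-! `L'` is the preimage of `L` under the monoid morphism `π : w ↦ a^{|w|_a}`, which is the
identity on `{a}*`. Because `L ⊆ {a}*`, `u ≡_{L'} v` holds iff `π u ≡_L π v`, so the Nerode
classes of `L'` inject into those of `L`, and the product-form condition only has content at the
letter `a`, where it is this same equivalence. -/

section ReplicateCount

variable {α : Type*} [DecidableEq α] (a : α)

def replicateCount (w : List α) : List α :=
  List.replicate (w.count a) a

variable {a}

theorem replicateCount_append (u v : List α) :
    replicateCount a (u ++ v) = replicateCount a u ++ replicateCount a v := by
  simp only [replicateCount, List.count_append, List.replicate_add]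

theorem replicateCount_eq_self {w : List α} (hw : ∀ b ∈ w, b = a) : replicateCount a w = w := by
  rw [replicateCount, List.count_eq_length.mpr fun b hb => (hw b hb).symm]
  exact (List.eq_replicate_of_mem hw).symm

theorem replicateCount_replicate_of_ne {b : α} (hb : b ≠ a) (n : ℕ) :
    replicateCount a (List.replicate n b) = [] := by
  simp [replicateCount, List.count_replicate, hb]

theorem IsShuffleOf.count_eq {u v w : List α} (h : IsShuffleOf u v w) (x : α) :
    w.count x = u.count x + v.count x := by
  induction h with
  | nil => rfl
  | left _ ih => simp only [List.count_cons, ih]; omega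
  | right _ ih => simp only [List.count_cons, ih]; omega

theorem isShuffleOf_replicateCount_filter (w : List α) :
    IsShuffleOf (replicateCount a w) (w.filter (· ≠ a)) w := by
  induction w with
  | nil => exact IsShuffleOf.nil
  | cons b w ih =>
    by_cases hb : b = a
    · subst hb
      simpa [replicateCount, List.replicate_succ] using ih.left (a := b)
    · simpa [replicateCount, List.count_cons_of_ne hb, hb] using ih.right (a := b)

theorem preimage_replicateCount_eq_shuffleLang {L : Set (List α)}
    (hL : ∀ w ∈ L, ∀ x ∈ w, x = a) :
    replicateCount a ⁻¹' L = shuffleLang L {w | ∀ x ∈ w, x ≠ a} := by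
  ext w
  constructor
  · intro hw
    exact ⟨_, hw, _, fun x hx => by simpa using List.of_mem_filter hx,
      isShuffleOf_replicateCount_filter w⟩
  · rintro ⟨u, hu, v, hv, huvw⟩
    have hva : v.count a = 0 := List.count_eq_zero.mpr fun hav => hv a hav rfl
    have hwu : w.count a = u.count a := by rw [huvw.count_eq a, hva, add_zero]
    change List.replicate (w.count a) a ∈ L
    rwa [hwu, ← replicateCount, replicateCount_eq_self (hL u hu)]

/-- Since `L ⊆ {a}*`, only suffixes in `{a}*` can separate words in `L`, and on those
`replicateCount a` is the identity. -/
theorem nerodeEq_preimage_replicateCount_iff {L : Set (List α)}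
    (hL : ∀ w ∈ L, ∀ x ∈ w, x = a) (u v : List α) :
    NerodeEq (replicateCount a ⁻¹' L) u v ↔
      NerodeEq L (replicateCount a u) (replicateCount a v) := by
  constructor
  · intro huv x
    by_cases hx : ∀ b ∈ x, b = a
    · simpa only [Set.mem_preimage, replicateCount_append, replicateCount_eq_self hx] using huv x
    · push Not at hx
      obtain ⟨b, hbx, hba⟩ := hx
      have hnot : ∀ y, y ++ x ∉ L := fun y hy => hba (hL _ hy b (List.mem_append_right y hbx))
      exact iff_of_false (hnot _) (hnot _)
  · intro huv x
    simpa only [Set.mem_preimage, replicateCount_append] using huv (replicateCount a x)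

theorem commutativeLang_preimage_replicateCount (L : Set (List α)) :
    CommutativeLang (replicateCount a ⁻¹' L) := fun u v huv => by
  simp only [Set.mem_preimage, replicateCount, huv a]

theorem nerodeSetoid_preimage_replicateCount {L : Set (List α)}
    (hL : ∀ w ∈ L, ∀ x ∈ w, x = a) :
    nerodeSetoid (replicateCount a ⁻¹' L) = (nerodeSetoid L).comap (replicateCount a) :=
  Setoid.ext (nerodeEq_preimage_replicateCount_iff hL)

theorem RegularLang.preimage_replicateCount {L : Set (List α)}
    (hL : ∀ w ∈ L, ∀ x ∈ w, x = a) (hreg : RegularLang L) :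
    RegularLang (replicateCount a ⁻¹' L) := by
  have : Finite (Quotient (nerodeSetoid L)) := hreg
  rw [RegularLang, nerodeSetoid_preimage_replicateCount hL]
  exact Finite.of_equiv _ (Setoid.comapQuotientEquiv _ _).symm

theorem hasProductForm_preimage_replicateCount {L : Set (List α)}
    (hL : ∀ w ∈ L, ∀ x ∈ w, x = a) :
    HasProductForm (replicateCount a ⁻¹' L) := by
  have hself : ∀ w : List α,
      replicateCount a (List.replicate (w.count a) a) = replicateCount a w :=
    fun w => replicateCount_eq_self fun _ => List.eq_of_mem_replicate
  intro u v
  simp only [nerodeEq_preimage_replicateCount_iff hL]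
  refine ⟨fun huv x => ?_, fun h => by simpa only [hself] using h a⟩
  by_cases hx : x = a
  · subst hx
    simpa only [hself] using huv
  · simp only [replicateCount_replicate_of_ne hx]
    exact fun _ => Iff.rfl

theorem preimage_replicateCount_of_forall_eq (hα : ∀ x : α, x = a) (M : Set (List α)) :
    replicateCount a ⁻¹' M = M := by
  ext w
  rw [Set.mem_preimage, replicateCount_eq_self fun b _ => hα b]

end ReplicateCount

/-- If `L ⊆ {a}*` is regular, then `L' = L ⧢ (Σ∖{a})* = {w : a^{|w|_a} ∈ L}` is a
commutative regular language with a product-form minimal automaton. In particular,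
over a unary alphabet every regular language is commutative with a product-form
minimal automaton. -/
theorem stmt7 {α : Type*} [Fintype α] [DecidableEq α] (a : α) (L : Set (List α))
    (hsub : ∀ w ∈ L, ∀ x ∈ w, x = a) (hreg : RegularLang L) :
    ({w : List α | List.replicate (w.count a) a ∈ L}
        = shuffleLang L {w : List α | ∀ x ∈ w, x ≠ a} ∧
      CommutativeLang {w : List α | List.replicate (w.count a) a ∈ L} ∧
      RegularLang {w : List α | List.replicate (w.count a) a ∈ L} ∧
      HasProductForm {w : List α | List.replicate (w.count a) a ∈ L}) ∧
    (Fintype.card α = 1 →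
      ∀ M : Set (List α), RegularLang M → CommutativeLang M ∧ HasProductForm M) := by
  refine ⟨⟨preimage_replicateCount_eq_shuffleLang hsub,
    commutativeLang_preimage_replicateCount L, hreg.preimage_replicateCount hsub,
    hasProductForm_preimage_replicateCount hsub⟩, fun hcard M _ => ?_⟩
  have hα : ∀ x : α, x = a := fun x => Fintype.card_le_one_iff.mp hcard.le x a
  rw [← preimage_replicateCount_of_forall_eq hα M]
  exact ⟨commutativeLang_preimage_replicateCount M,
    hasProductForm_preimage_replicateCount fun _ _ x _ => hα x⟩
end

section
/- Let Σ = {a_1,…,a_k} and let L ⊆ Σ* satisfy L = π_1(L) ⧢ π_2(L) ⧢ ⋯ ⧢ π_k(L). Then for each j ∈ {1,…,k} and all m, n ≥ 0: a_j^m ≡_L a_j^n (Nerode right-congruence of L over Σ) if and only if a_j^m ≡_{π_j(L)} a_j^n, where the latter is the Nerode right-congruence of π_j(L) considered over the unary alphabet {a_j}, i.e., for all x ∈ {a_j}*: a_j^m x ∈ π_j(L) ↔ a_j^n x ∈ π_j(L). -/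
/-- The iterated shuffle `L₁ ⧢ L₂ ⧢ ⋯ ⧢ Lₙ` of a list of languages
(`{ε}` is the neutral element of the shuffle). -/
def shuffles {α : Type*} (Ls : List (Set (List α))) : Set (List α) :=
  Ls.foldr shuffleLang {[]}

/-! Since the factors `π_i(L)` use pairwise distinct letters, a shuffle of them is determined by
its projections: `w ∈ L` iff `π_i(w) ∈ π_i(L)` for every `i`. Membership of `a^m x` in `L`
therefore splits into `a^m π_a(x) ∈ π_a(L)` and conditions on the other projections of `x`,
which do not see the prefix `a^m`. Conversely, an `a`-word `x` with `a^m x ∈ π_a(L)` is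
completed to a word of `L` by the other letters of a witness, so `L`-equivalence of `a^m` and
`a^n` transfers to `π_a(L)`. -/

section Shuffle

variable {α : Type*}

theorem IsShuffleOf.eq_of_left_nil {v w : List α} (h : IsShuffleOf [] v w) : w = v := by
  generalize hu : ([] : List α) = u at h
  induction h with
  | nil => rfl
  | left => simp at hu
  | right _ ih => rw [ih hu]

theorem IsShuffleOf.eq_of_right_nil {u w : List α} (h : IsShuffleOf u [] w) : w = u := by
  generalize hv : ([] : List α) = v at h
  induction h with
  | nil => rfl
  | left _ ih => rw [ih hv]
  | right => simp at hv

theorem IsShuffleOf.filter (p : α → Bool) {u v w : List α} (h : IsShuffleOf u v w) :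
    IsShuffleOf (u.filter p) (v.filter p) (w.filter p) := by
  induction h with
  | nil => exact .nil
  | @left _ _ _ a _ ih => by_cases hp : p a <;> simp [hp, ih, IsShuffleOf.left]
  | @right _ _ _ a _ ih => by_cases hp : p a <;> simp [hp, ih, IsShuffleOf.right]

theorem isShuffleOf_filter_filter_not (p : α → Bool) (w : List α) :
    IsShuffleOf (w.filter p) (w.filter fun c => !p c) w := by
  induction w with
  | nil => exact .nil
  | cons a w ih => by_cases hp : p a <;> simp [hp, ih, IsShuffleOf.left, IsShuffleOf.right]

theorem mem_shuffleLang_iff {p : α → Bool} {U V : Set (List α)}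
    (hU : ∀ u ∈ U, ∀ c ∈ u, p c) (hV : ∀ v ∈ V, ∀ c ∈ v, p c = false) (w : List α) :
    w ∈ shuffleLang U V ↔ w.filter p ∈ U ∧ w.filter (fun c => !p c) ∈ V := by
  constructor
  · rintro ⟨u, hu, v, hv, hw⟩
    have hup : u.filter p = u := List.filter_eq_self.mpr (hU u hu)
    have hvp : v.filter p = [] := List.filter_eq_nil_iff.mpr (by simpa using hV v hv)
    have hun : u.filter (fun c => !p c) = [] :=
      List.filter_eq_nil_iff.mpr (by simpa using hU u hu)
    have hvn : v.filter (fun c => !p c) = v := List.filter_eq_self.mpr (by simpa using hV v hv)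
    have hwp := hw.filter p
    have hwn := hw.filter fun c => !p c
    rw [hup, hvp] at hwp
    rw [hun, hvn] at hwn
    exact ⟨hwp.eq_of_right_nil ▸ hu, hwn.eq_of_left_nil ▸ hv⟩
  · rintro ⟨hwU, hwV⟩
    exact ⟨_, hwU, _, hwV, isShuffleOf_filter_filter_not p w⟩

theorem mem_shuffles_map_iff [DecidableEq α] {l : List α} (hl : l.Nodup)
    {F : α → Set (List α)} (hF : ∀ a, ∀ u ∈ F a, ∀ c ∈ u, c = a) (w : List α) :
    w ∈ shuffles (l.map F) ↔ (∀ c ∈ w, c ∈ l) ∧ ∀ a ∈ l, w.filter (· = a) ∈ F a := by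
  induction l generalizing w with
  | nil =>
    cases w with
    | nil => simp [shuffles]
    | cons c w => simpa [shuffles] using ⟨c, fun h => absurd rfl h⟩
  | cons a l ih =>
    obtain ⟨ha, hl⟩ := List.nodup_cons.mp hl
    have hV : ∀ v ∈ shuffles (l.map F), ∀ c ∈ v, decide (c = a) = false := by
      intro v hv c hc
      simpa using fun hca : c = a => ha (hca ▸ ((ih hl v).mp hv).1 c hc)
    have hfilter : ∀ b ∈ l,
        (w.filter fun c => !decide (c = a)).filter (· = b) = w.filter (· = b) := by
      intro b hb
      rw [List.filter_filter]
      refine List.filter_congr fun c _ => ?_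
      by_cases hcb : c = b
      · simp [hcb, show b ≠ a from fun h => ha (h ▸ hb)]
      · simp [hcb]
    have hU : ∀ u ∈ F a, ∀ c ∈ u, decide (c = a) = true := by simpa using hF a
    rw [List.map_cons, shuffles, List.foldr_cons, ← shuffles, mem_shuffleLang_iff hU hV, ih hl]
    have hproj : (∀ b ∈ l, ((w.filter fun c => !decide (c = a)).filter (· = b)) ∈ F b) ↔
        ∀ b ∈ l, w.filter (· = b) ∈ F b :=
      forall₂_congr fun b hb => by rw [hfilter b hb]
    rw [hproj, List.forall_mem_cons]
    simp only [List.mem_cons, List.mem_filter, Bool.not_eq_true',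
      decide_eq_false_iff_not, and_imp, or_iff_not_imp_left]
    tauto

end Shuffle

section ProjectionProduct

variable {α : Type*} [DecidableEq α]

theorem filter_replicate_append_self (a : α) (m : ℕ) (x : List α) :
    (List.replicate m a ++ x).filter (· = a) = List.replicate m a ++ x.filter (· = a) := by
  simp [List.filter_append]

theorem filter_replicate_append_of_ne {a i : α} (h : i ≠ a) (m : ℕ) (x : List α) :
    (List.replicate m a ++ x).filter (· = i) = x.filter (· = i) := by
  simp [List.filter_append, Ne.symm h]

variable {L : Set (List α)}
  (hL : ∀ w, w ∈ L ↔ ∀ i, w.filter (· = i) ∈ (fun w : List α => w.filter (· = i)) '' L)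
include hL

theorem replicate_append_mem_iff (a : α) (m : ℕ) (x : List α) :
    List.replicate m a ++ x ∈ L ↔
      List.replicate m a ++ x.filter (· = a) ∈ (fun w : List α => w.filter (· = a)) '' L ∧
        ∀ i ≠ a, x.filter (· = i) ∈ (fun w : List α => w.filter (· = i)) '' L := by
  rw [hL]
  constructor
  · intro h
    refine ⟨filter_replicate_append_self a m x ▸ h a, fun i hi => ?_⟩
    exact filter_replicate_append_of_ne hi m x ▸ h i
  · rintro ⟨ha, hne⟩ i
    by_cases hi : i = a
    · subst hi
      exact (filter_replicate_append_self i m x).symm ▸ ha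
    · exact (filter_replicate_append_of_ne hi m x).symm ▸ hne i hi

theorem replicate_append_mem_image_of_nerodeEq {a : α} {m n : ℕ}
    (h : NerodeEq L (List.replicate m a) (List.replicate n a))
    {x : List α} (hx : ∀ c ∈ x, c = a)
    (hm : List.replicate m a ++ x ∈ (fun w : List α => w.filter (· = a)) '' L) :
    List.replicate n a ++ x ∈ (fun w : List α => w.filter (· = a)) '' L := by
  obtain ⟨w, hw, hwa⟩ := hm
  set y := w.filter (· ≠ a) ++ x
  have hya : y.filter (· = a) = x := by
    simpa [y, List.filter_append, List.filter_filter] using hx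
  have hyi : ∀ i ≠ a, y.filter (· = i) = w.filter (· = i) := by
    intro i hi
    have hxi : x.filter (· = i) = [] :=
      List.filter_eq_nil_iff.mpr fun c hc => by simp [hx c hc, Ne.symm hi]
    rw [List.filter_append, List.filter_filter, hxi, List.append_nil]
    exact List.filter_congr fun c _ => by by_cases hc : c = i <;> simp [hc, hi]
  have hmy : List.replicate m a ++ y ∈ L :=
    (replicate_append_mem_iff hL a m y).mpr
      ⟨hya ▸ ⟨w, hw, hwa⟩, fun i hi => hyi i hi ▸ Set.mem_image_of_mem _ hw⟩
  simpa [hya] using ((replicate_append_mem_iff hL a n y).mp ((h y).mp hmy)).1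

theorem nerodeEq_replicate_iff (a : α) (m n : ℕ) :
    NerodeEq L (List.replicate m a) (List.replicate n a) ↔
      ∀ x : List α, (∀ c ∈ x, c = a) →
        (List.replicate m a ++ x ∈ (fun w : List α => w.filter (· = a)) '' L ↔
          List.replicate n a ++ x ∈ (fun w : List α => w.filter (· = a)) '' L) := by
  constructor
  · intro h x hx
    exact ⟨replicate_append_mem_image_of_nerodeEq hL h hx,
      replicate_append_mem_image_of_nerodeEq hL (fun y => (h y).symm) hx⟩
  · intro h x
    have hxa : ∀ c ∈ x.filter (· = a), c = a := fun c hc => by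
      simpa using (List.mem_filter.mp hc).2
    rw [replicate_append_mem_iff hL, replicate_append_mem_iff hL, h _ hxa]

end ProjectionProduct

/-- If `L = π_1(L) ⧢ ⋯ ⧢ π_k(L)` over `Σ = {a_1, …, a_k}`, then for each letter `a_j`
and all `m, n ≥ 0`: `a_j^m ≡_L a_j^n` iff `a_j^m` and `a_j^n` are Nerode-equivalent
for `π_j(L)` over the unary alphabet `{a_j}`. -/
theorem stmt10 (k : ℕ) (L : Set (List (Fin k)))
    (hL : L = shuffles
      (List.ofFn fun j : Fin k => (fun w : List (Fin k) => w.filter (fun x => x = j)) '' L)) :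
    ∀ (j : Fin k) (m n : ℕ),
      NerodeEq L (List.replicate m j) (List.replicate n j) ↔
      (∀ x : List (Fin k), (∀ c ∈ x, c = j) →
        (List.replicate m j ++ x ∈ (fun w : List (Fin k) => w.filter (fun y => y = j)) '' L ↔
         List.replicate n j ++ x ∈ (fun w : List (Fin k) => w.filter (fun y => y = j)) '' L)) := by
  have hproj : ∀ j, ∀ u ∈ (fun w : List (Fin k) => w.filter (· = j)) '' L, ∀ c ∈ u, c = j := by
    rintro j _ ⟨w, -, rfl⟩ c hc
    simpa using (List.mem_filter.mp hc).2
  have hmem : ∀ w, w ∈ L ↔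
      ∀ i, w.filter (· = i) ∈ (fun w : List (Fin k) => w.filter (· = i)) '' L := by
    intro w
    rw [Set.ext_iff.mp hL w, List.ofFn_eq_map, mem_shuffles_map_iff (List.nodup_finRange k) hproj]
    simp [List.mem_finRange]
  exact nerodeEq_replicate_iff hmem
end

section
/- Let Σ = Σ_1 ∪ ⋯ ∪ Σ_k be a partition of the alphabet into pairwise disjoint nonempty blocks and let L ⊆ Σ* be closed under the associated partial commutation. Then for each i ∈ {1,…,k}, the projection satisfies π_{Σ_i}(L) = { u ∈ Σ_i* : ∃w ∈ L such that u ≡_L π_{Σ_i}(w) }. -/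
/-- With a partition of the alphabet encoded by a coloring `c : α → Fin k`
(block `Σ_i = c⁻¹(i)`), `projC c i w` is the projection `π_{Σ_i}(w)`. -/
def projC {α : Type*} {k : ℕ} (c : α → Fin k) (i : Fin k) (w : List α) : List α :=
  w.filter (fun x => c x = i)

/-- `L` is closed under the partial commutation associated with the partition
encoded by `c : α → Fin k`: letters in distinct blocks commute. -/
def PartialCommClosed {α : Type*} {k : ℕ} (c : α → Fin k) (L : Set (List α)) : Prop :=
  ∀ x y : α, c x ≠ c y → ∀ u v : List α,
    (u ++ x :: y :: v ∈ L ↔ u ++ y :: x :: v ∈ L)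

/-!
Partial commutation lets every letter outside `Σ_i` be moved to the right of every letter of
`Σ_i`, so `w ∈ L` iff `π_{Σ_i}(w) · r ∈ L`, where `r` is the subword of `w` outside `Σ_i`.
Hence if `u ∈ Σ_i*` is Nerode-equivalent to `π_{Σ_i}(w)` for some `w ∈ L`, then `u · r ∈ L`,
and `u` is its projection.
-/

section Projection

variable {α : Type*} {k : ℕ} (c : α → Fin k) (i : Fin k)

lemma projC_append (u v : List α) : projC c i (u ++ v) = projC c i u ++ projC c i v :=
  List.filter_append _ _

variable {c i}

lemma mem_projC {x : α} {w : List α} (hx : x ∈ projC c i w) : c x = i := by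
  simpa using List.of_mem_filter hx

lemma projC_eq_self {u : List α} (hu : ∀ x ∈ u, c x = i) : projC c i u = u :=
  List.filter_eq_self.mpr fun x hx => by simpa using hu x hx

lemma projC_filter_ne (w : List α) : projC c i (w.filter fun x => c x ≠ i) = [] :=
  List.filter_eq_nil_iff.mpr fun x hx => by simpa using List.of_mem_filter hx

end Projection

namespace PartialCommClosed

variable {α : Type*} {k : ℕ} {c : α → Fin k} {L : Set (List α)}

lemma mem_cons_append_iff (hL : PartialCommClosed c L) {a : α} {q : List α}
    (hq : ∀ x ∈ q, c x ≠ c a) (p s : List α) :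
    p ++ a :: (q ++ s) ∈ L ↔ p ++ q ++ a :: s ∈ L := by
  induction q generalizing p with
  | nil => simp
  | cons b q ih =>
    have hswap := hL a b (hq b List.mem_cons_self).symm p (q ++ s)
    have hrest := ih (fun x hx => hq x (List.mem_cons_of_mem b hx)) (p ++ [b])
    simp only [List.append_assoc, List.singleton_append] at hrest ⊢
    exact hswap.trans hrest

lemma mem_append_iff_projC_append (hL : PartialCommClosed c L) (i : Fin k) (w p : List α) :
    p ++ w ∈ L ↔ p ++ projC c i w ++ w.filter (fun x => c x ≠ i) ∈ L := by
  induction w generalizing p with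
  | nil => simp [projC]
  | cons a w ih =>
    have hrest := ih (p ++ [a])
    simp only [List.append_assoc, List.singleton_append] at hrest
    by_cases ha : c a = i
    · simpa [projC, ha] using hrest
    · have hmove := hL.mem_cons_append_iff (q := projC c i w)
        (fun x hx => by rw [mem_projC hx]; exact Ne.symm ha) p (w.filter fun x => c x ≠ i)
      simpa [projC, ha] using hrest.trans hmove

lemma mem_iff_projC_append (hL : PartialCommClosed c L) (i : Fin k) (w : List α) :
    w ∈ L ↔ projC c i w ++ w.filter (fun x => c x ≠ i) ∈ L := by
  simpa using hL.mem_append_iff_projC_append i w []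

end PartialCommClosed

theorem stmt14_general {α : Type*} {k : ℕ} (c : α → Fin k)
    (L : Set (List α)) (hL : PartialCommClosed c L) (i : Fin k) :
    projC c i '' L =
      {u : List α | (∀ x ∈ u, c x = i) ∧ ∃ w ∈ L, NerodeEq L u (projC c i w)} := by
  ext u
  constructor
  · rintro ⟨w, hw, rfl⟩
    exact ⟨fun x hx => mem_projC hx, w, hw, fun _ => Iff.rfl⟩
  · rintro ⟨hu, w, hw, hequiv⟩
    set r := w.filter fun x => c x ≠ i
    have hur : u ++ r ∈ L := (hequiv r).mpr ((hL.mem_iff_projC_append i w).mp hw)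
    refine ⟨u ++ r, hur, ?_⟩
    rw [projC_append, projC_eq_self hu, projC_filter_ne, List.append_nil]

/-- If `L` is closed under the partial commutation associated with the partition
`Σ = Σ_1 ∪ ⋯ ∪ Σ_k`, then for each `i`,
`π_{Σ_i}(L) = {u ∈ Σ_i* : ∃ w ∈ L, u ≡_L π_{Σ_i}(w)}`. -/
theorem stmt14 {α : Type*} {k : ℕ} (c : α → Fin k) (hsurj : Function.Surjective c)
    (L : Set (List α)) (hL : PartialCommClosed c L) (i : Fin k) :
    projC c i '' L =
      {u : List α | (∀ x ∈ u, c x = i) ∧ ∃ w ∈ L, NerodeEq L u (projC c i w)} :=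
  stmt14_general c L hL i
end
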